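/- Let g > 0, β > 0 and λ ∈ ℝ. The one-particle BC Toda eigenfunction Ψ_λ(x) = (2β)^{iλ}/Γ(g - iλ) · ∫_{ln β}^∞ exp(iλ(x - 2y) - e^{y-x}) (1 + βe^{-y})^{-iλ - g} (1 - βe^{-y})^{-iλ + g - 1} dy satisfies the pointwise bound |Ψ_λ(x)| ≤ P(|x|)/|Γ(g - iλ)| · exp(-βe^{-x}·θ(ln β - x)) for all x ∈ ℝ, where P is a polynomial (depending on β, g but not on λ) and θ is the Heaviside step function. -/

import Mathlib

open MeasureTheory

noncomputable def theta (t : ℝ) : ℝ := if 0 ≤ t then 1 else 0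

/-- The one-particle BC Toda eigenfunction
`Ψ_λ(x) = (2β)^{iλ}/Γ(g - iλ) · ∫_{ln β}^∞ e^{iλ(x-2y) - e^{y-x}}
(1+βe^{-y})^{-iλ-g} (1-βe^{-y})^{-iλ+g-1} dy`. -/
noncomputable def PsiOne (g β lam x : ℝ) : ℂ :=
  ((2 * β : ℝ) : ℂ) ^ (Complex.I * (lam : ℂ)) / Complex.Gamma ((g : ℂ) - Complex.I * lam) *
    ∫ y in Set.Ioi (Real.log β),
      Complex.exp (Complex.I * (lam : ℂ) * ((x - 2 * y : ℝ) : ℂ)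
          - Complex.exp ((y - x : ℝ) : ℂ)) *
        ((1 + β * Real.exp (-y) : ℝ) : ℂ) ^ (-Complex.I * (lam : ℂ) - (g : ℂ)) *
        ((1 - β * Real.exp (-y) : ℝ) : ℂ) ^ (-Complex.I * (lam : ℂ) + (g : ℂ) - 1)

open Real Set

/-!
After the substitution `t = y - log β` the modulus of the integrand no longer depends on `λ`:
it is `exp (-c eᵗ) (1 + e⁻ᵗ)^(-g) (1 - e⁻ᵗ)^(g-1)` with `c = β e⁻ˣ`. The middle factor is at
most `1`; the last one behaves like `t^(g-1)` near `0` (integrable since `g > 0`) and is bounded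
for `t ≥ 1`; the first is at most `e⁻ᶜ` up to `s = max 0 (x - log β)`, where `c eˢ ≥ 1`, and at
most `e⁻ᶜ e^(s-t)` beyond. So the integral is at most `e⁻ᶜ` times an affine function of
`s ≤ |x| + |log β|`, and `e⁻ᶜ ≤ exp (-c θ(log β - x))`.
-/

theorem setIntegral_Ioi_comp_add_right {E : Type*} [NormedAddCommGroup E] [NormedSpace ℝ E]
    (f : ℝ → E) (a : ℝ) : ∫ t in Ioi 0, f (t + a) = ∫ y in Ioi a, f y := by
  simpa using (measurePreserving_add_right volume a).setIntegral_preimage_emb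
    (measurableEmbedding_addRight a) f (Ioi a)

theorem integral_Ioc_zero_one_rpow_sub_one {g : ℝ} (hg : 0 < g) :
    ∫ t in Ioc 0 1, t ^ (g - 1) = 1 / g := by
  rw [← intervalIntegral.integral_of_le zero_le_one, integral_rpow (by left; linarith)]
  simp [hg.ne']

theorem integrable_indicator_Ioc_const_mul_rpow (a : ℝ) {g : ℝ} (hg : 0 < g) :
    Integrable ((Ioc 0 1).indicator fun t : ℝ => a * t ^ (g - 1)) :=
  (integrable_indicator_iff measurableSet_Ioc).2 <|
    ((intervalIntegrable_iff_integrableOn_Ioc_of_le zero_le_one).1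
      (intervalIntegral.intervalIntegrable_rpow' (by linarith))).const_mul _

theorem theta_le_one (t : ℝ) : theta t ≤ 1 := by
  unfold theta; split_ifs <;> norm_num

theorem mul_exp_neg_one_le_one_sub_exp_neg {t : ℝ} (h0 : 0 ≤ t) (h1 : t ≤ 1) :
    t * exp (-1) ≤ 1 - exp (-t) := calc
  t * exp (-1) ≤ t * exp (-t) := by gcongr
  _ ≤ 1 - exp (-t) := by
    have hmul : exp t * exp (-t) = 1 := by rw [← exp_add, add_neg_cancel, exp_zero]
    nlinarith [add_one_le_exp t, exp_pos (-t)]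

theorem exp_neg_mul_exp_le {c t : ℝ} (hc : 0 ≤ c) (ht : 0 ≤ t) :
    exp (-(c * exp t)) ≤ exp (-c) := by
  gcongr
  exact le_mul_of_one_le_right hc (one_le_exp ht)

theorem exp_neg_mul_exp_le_of_le {c s t : ℝ} (hs : 0 ≤ s) (hcs : 1 ≤ c * exp s) (hst : s ≤ t) :
    exp (-(c * exp t)) ≤ exp (-c) * exp (s - t) := by
  rw [← exp_add, exp_le_exp]
  have hc : c ≤ c * exp s := le_mul_of_one_le_right (by nlinarith [exp_pos s]) (one_le_exp hs)
  have hsplit : c * exp t = c * exp s * exp (t - s) := by rw [mul_assoc, ← exp_add]; ring_nf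
  nlinarith [add_one_le_exp (t - s), one_le_exp (sub_nonneg.2 hst)]

theorem one_sub_exp_neg_one_pos : 0 < 1 - exp (-1) := by
  simp

theorem one_sub_exp_neg_rpow_le_of_one_le {g t : ℝ} (hg : 0 < g) (ht : 1 ≤ t) :
    (1 - exp (-t)) ^ (g - 1) ≤ (1 - exp (-1))⁻¹ := by
  have hpos : 0 < 1 - exp (-t) := by simpa using exp_lt_one_iff.2 (by linarith : -t < 0)
  calc (1 - exp (-t)) ^ (g - 1) ≤ (1 - exp (-t)) ^ (-1 : ℝ) :=
        rpow_le_rpow_of_exponent_ge hpos (by linarith [exp_pos (-t)]) (by linarith)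
    _ ≤ (1 - exp (-1))⁻¹ := by
        rw [rpow_neg_one]
        gcongr
        exact one_sub_exp_neg_one_pos

theorem one_sub_exp_neg_rpow_le_of_le_one {g t : ℝ} (hg : g ≤ 1) (h0 : 0 < t) (h1 : t ≤ 1) :
    (1 - exp (-t)) ^ (g - 1) ≤ exp (1 - g) * t ^ (g - 1) := calc
  (1 - exp (-t)) ^ (g - 1) ≤ (t * exp (-1)) ^ (g - 1) :=
    rpow_le_rpow_of_nonpos (by positivity) (mul_exp_neg_one_le_one_sub_exp_neg h0.le h1)
      (by linarith)
  _ = exp (1 - g) * t ^ (g - 1) := by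
    rw [mul_rpow h0.le (exp_pos _).le, ← exp_mul, mul_comm]; ring_nf

theorem one_sub_exp_neg_rpow_le {g t : ℝ} (hg : 0 < g) (ht : 0 < t) :
    (1 - exp (-t)) ^ (g - 1) ≤
      (Ioc 0 1).indicator (fun t => exp (1 - g) * t ^ (g - 1)) t + (1 - exp (-1))⁻¹ := by
  have hC : 1 ≤ (1 - exp (-1))⁻¹ :=
    (one_le_inv₀ one_sub_exp_neg_one_pos).2 (by linarith [exp_pos (-1)])
  rcases le_or_gt t 1 with ht1 | ht1
  · rw [indicator_of_mem (show t ∈ Ioc 0 1 from ⟨ht, ht1⟩)]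
    rcases le_or_gt g 1 with hg1 | hg1
    · linarith [one_sub_exp_neg_rpow_le_of_le_one hg1 ht ht1]
    · have : (1 - exp (-t)) ^ (g - 1) ≤ 1 :=
        rpow_le_one (by linarith [exp_le_one_iff.2 (neg_nonpos.2 ht.le)])
          (by linarith [exp_pos (-t)]) (by linarith)
      linarith [show 0 ≤ exp (1 - g) * t ^ (g - 1) by positivity]
  · rw [indicator_of_notMem (fun h => (not_le.2 ht1) h.2), zero_add]
    exact one_sub_exp_neg_rpow_le_of_one_le hg ht1.le

noncomputable def plateauDecay (s t : ℝ) : ℝ :=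
  (Ioc 0 s).indicator 1 t + (Ioi s).indicator (fun t => exp (s - t)) t

theorem plateauDecay_nonneg (s t : ℝ) : 0 ≤ plateauDecay s t :=
  add_nonneg (indicator_nonneg (fun _ _ => zero_le_one) _)
    (indicator_nonneg (fun _ _ => (exp_pos _).le) _)

theorem plateauDecay_le_one {s t : ℝ} (ht : 0 < t) : plateauDecay s t ≤ 1 := by
  unfold plateauDecay
  rcases le_or_gt t s with hts | hts
  · simp [indicator_of_mem (show t ∈ Ioc 0 s from ⟨ht, hts⟩), hts]
  · simp [not_le.2 hts, hts, exp_le_one_iff]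
    linarith

theorem integrable_indicator_Ioc_one (s : ℝ) : Integrable ((Ioc 0 s).indicator (1 : ℝ → ℝ)) :=
  (integrable_indicator_iff measurableSet_Ioc).2 (integrableOn_const measure_Ioc_lt_top.ne)

theorem integrable_indicator_Ioi_exp_sub (s : ℝ) :
    Integrable ((Ioi s).indicator fun t => exp (s - t)) := by
  refine (integrable_indicator_iff measurableSet_Ioi).2 ?_
  have := (exp_neg_integrableOn_Ioi s zero_lt_one).const_mul (exp s)
  simp only [neg_mul, one_mul, ← exp_add, ← sub_eq_add_neg] at this
  exact this

theorem integrable_plateauDecay (s : ℝ) : Integrable (plateauDecay s) :=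
  (integrable_indicator_Ioc_one s).add (integrable_indicator_Ioi_exp_sub s)

theorem integral_plateauDecay {s : ℝ} (hs : 0 ≤ s) :
    ∫ t in Ioi 0, plateauDecay s t = s + 1 := by
  unfold plateauDecay
  rw [integral_add (integrable_indicator_Ioc_one s).integrableOn
      (integrable_indicator_Ioi_exp_sub s).integrableOn,
    setIntegral_indicator measurableSet_Ioc, setIntegral_indicator measurableSet_Ioi,
    inter_eq_self_of_subset_right Ioc_subset_Ioi_self,
    inter_eq_self_of_subset_right (Ioi_subset_Ioi hs)]
  simp only [Pi.one_apply, setIntegral_const, sub_eq_add_neg, exp_add, integral_const_mul,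
    integral_exp_neg_Ioi]
  simp [hs, ← exp_add]

theorem exp_neg_mul_exp_le_plateauDecay {c s t : ℝ} (hs : 0 ≤ s) (hcs : 1 ≤ c * exp s)
    (ht : 0 < t) : exp (-(c * exp t)) ≤ exp (-c) * plateauDecay s t := by
  unfold plateauDecay
  rcases le_or_gt t s with hts | hts
  · have hc : 0 ≤ c := by nlinarith [exp_pos s]
    simpa [indicator_of_mem (show t ∈ Ioc 0 s from ⟨ht, hts⟩), hts]
      using exp_neg_mul_exp_le hc ht.le
  · simpa [not_le.2 hts, hts] using exp_neg_mul_exp_le_of_le hs hcs hts.le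

/-- The modulus of the integrand of `PsiOne`, in the variable `t = y - log β` and with
`c = β * exp (-x)`. -/
noncomputable def todaWeight (g c t : ℝ) : ℝ :=
  exp (-(c * exp t)) * (1 + exp (-t)) ^ (-g) * (1 - exp (-t)) ^ (g - 1)

theorem todaWeight_nonneg (g c : ℝ) {t : ℝ} (ht : 0 ≤ t) : 0 ≤ todaWeight g c t := by
  have : 0 ≤ 1 - exp (-t) := by linarith [exp_le_one_iff.2 (neg_nonpos.2 ht)]
  unfold todaWeight
  positivity

theorem todaWeight_le {g c s t : ℝ} (hg : 0 < g) (hs : 0 ≤ s) (hcs : 1 ≤ c * exp s)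
    (ht : 0 < t) :
    todaWeight g c t ≤ exp (-c) *
      ((Ioc 0 1).indicator (fun t => exp (1 - g) * t ^ (g - 1)) t +
        (1 - exp (-1))⁻¹ * plateauDecay s t) := by
  set φ := (Ioc 0 1).indicator (fun t => exp (1 - g) * t ^ (g - 1)) t
  have hφ : 0 ≤ φ :=
    indicator_nonneg (fun _ hx => mul_nonneg (exp_pos _).le (rpow_nonneg hx.1.le _)) _
  have hw0 := plateauDecay_nonneg s t
  have hw1 := plateauDecay_le_one (s := s) ht
  have hE := exp_neg_mul_exp_le_plateauDecay hs hcs ht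
  have hA : (1 + exp (-t)) ^ (-g) ≤ 1 :=
    rpow_le_one_of_one_le_of_nonpos (by linarith [exp_pos (-t)]) (by linarith)
  have hA0 : 0 ≤ (1 + exp (-t)) ^ (-g) := by positivity
  have hB := one_sub_exp_neg_rpow_le hg ht
  have hB0 : 0 ≤ (1 - exp (-t)) ^ (g - 1) :=
    rpow_nonneg (by linarith [exp_le_one_iff.2 (neg_nonpos.2 ht.le)]) _
  calc todaWeight g c t ≤ exp (-c) * plateauDecay s t * 1 * (φ + (1 - exp (-1))⁻¹) := by
        unfold todaWeight; gcongr
    _ ≤ exp (-c) * (φ + (1 - exp (-1))⁻¹ * plateauDecay s t) := by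
        have : 0 ≤ exp (-c) := (exp_pos _).le
        have : 0 ≤ (1 - exp (-1))⁻¹ := inv_nonneg.2 one_sub_exp_neg_one_pos.le
        nlinarith [mul_le_mul_of_nonneg_left hw1 hφ]

theorem integral_todaWeight_le {g c s : ℝ} (hg : 0 < g) (hs : 0 ≤ s) (hcs : 1 ≤ c * exp s) :
    ∫ t in Ioi 0, todaWeight g c t ≤
      (exp (1 - g) / g + (1 - exp (-1))⁻¹ * (s + 1)) * exp (-c) := by
  have hφ := integrable_indicator_Ioc_const_mul_rpow (exp (1 - g)) hg
  have hw := (integrable_plateauDecay s).const_mul (1 - exp (-1))⁻¹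
  calc ∫ t in Ioi 0, todaWeight g c t
      ≤ ∫ t in Ioi 0, exp (-c) * ((Ioc 0 1).indicator (fun t => exp (1 - g) * t ^ (g - 1)) t +
          (1 - exp (-1))⁻¹ * plateauDecay s t) := by
        refine integral_mono_of_nonneg ?_ ((hφ.add hw).const_mul _).integrableOn ?_
        · exact (ae_restrict_iff' measurableSet_Ioi).2
            (.of_forall fun t ht => todaWeight_nonneg g c (le_of_lt ht))
        · exact (ae_restrict_iff' measurableSet_Ioi).2
            (.of_forall fun t ht => todaWeight_le hg hs hcs ht)
    _ = (exp (1 - g) / g + (1 - exp (-1))⁻¹ * (s + 1)) * exp (-c) := by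
        rw [integral_const_mul, integral_add hφ.integrableOn hw.integrableOn, integral_const_mul,
          integral_plateauDecay hs, setIntegral_indicator measurableSet_Ioc,
          inter_eq_self_of_subset_right Ioc_subset_Ioi_self, integral_const_mul,
          integral_Ioc_zero_one_rpow_sub_one hg]
        ring

theorem norm_PsiOne_integrand (g lam x : ℝ) {β y : ℝ} (hβ : 0 < β) (hy : log β < y) :
    ‖Complex.exp (Complex.I * (lam : ℂ) * ((x - 2 * y : ℝ) : ℂ)
          - Complex.exp ((y - x : ℝ) : ℂ)) *
        ((1 + β * Real.exp (-y) : ℝ) : ℂ) ^ (-Complex.I * (lam : ℂ) - (g : ℂ)) *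
        ((1 - β * Real.exp (-y) : ℝ) : ℂ) ^ (-Complex.I * (lam : ℂ) + (g : ℂ) - 1)‖ =
      todaWeight g (β * exp (-x)) (y - log β) := by
  have hβy : β * exp (-y) = exp (-(y - log β)) := by
    rw [neg_sub, exp_sub, exp_log hβ, exp_neg, div_eq_mul_inv]
  have hyx : exp (y - x) = β * exp (-x) * exp (y - log β) := by
    rw [exp_sub y (log β), exp_log hβ, exp_sub, exp_neg]; field_simp
  have h1 : 0 < 1 + β * exp (-y) := by positivity
  have h2 : 0 < 1 - β * exp (-y) := by
    rw [hβy, sub_pos, exp_lt_one_iff]; linarith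
  rw [norm_mul, norm_mul, Complex.norm_exp, Complex.norm_cpow_eq_rpow_re_of_pos h1,
    Complex.norm_cpow_eq_rpow_re_of_pos h2, todaWeight, ← hβy, ← hyx]
  congr 3
  · rw [Complex.sub_re, Complex.exp_ofReal_re]; simp
  all_goals simp

theorem norm_PsiOne_le (g lam x : ℝ) {β : ℝ} (hβ : 0 < β) :
    ‖PsiOne g β lam x‖ ≤
      (∫ t in Ioi 0, todaWeight g (β * exp (-x)) t) /
        ‖Complex.Gamma ((g : ℂ) - Complex.I * lam)‖ := by
  have hphase : ‖((2 * β : ℝ) : ℂ) ^ (Complex.I * (lam : ℂ))‖ = 1 := by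
    rw [Complex.norm_cpow_eq_rpow_re_of_pos (by positivity)]; simp
  rw [PsiOne, norm_mul, norm_div, hphase, one_div_mul_eq_div]
  gcongr
  refine (norm_integral_le_integral_norm _).trans_eq ?_
  rw [← setIntegral_Ioi_comp_add_right]
  refine setIntegral_congr_fun measurableSet_Ioi fun t ht => ?_
  rw [norm_PsiOne_integrand g lam x hβ (by simpa using (mem_Ioi.1 ht)), add_sub_cancel_right]

theorem stmt17 (g β : ℝ) (hg : 0 < g) (hβ : 0 < β) :
    ∃ P : Polynomial ℝ, ∀ lam x : ℝ,
      ‖PsiOne g β lam x‖ ≤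
        Polynomial.eval |x| P / ‖Complex.Gamma ((g : ℂ) - Complex.I * lam)‖ *
          Real.exp (-(β * Real.exp (-x)) * theta (Real.log β - x)) := by
  set C := (1 - exp (-1))⁻¹
  refine ⟨.C (exp (1 - g) / g + C * (|log β| + 1)) + .C C * .X, fun lam x => ?_⟩
  set s := max 0 (x - log β)
  have hcs : 1 ≤ β * exp (-x) * exp s := calc
    1 = β * exp (-x) * exp (x - log β) := by
      rw [mul_assoc, ← exp_add, show -x + (x - log β) = -log β by ring, exp_neg, exp_log hβ,
        mul_inv_cancel₀ hβ.ne']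
    _ ≤ β * exp (-x) * exp s := by gcongr; exact le_max_right _ _
  have hs : s ≤ |x| + |log β| :=
    max_le (by positivity) (by linarith [le_abs_self x, neg_abs_le (log β)])
  have hC : 0 ≤ C := inv_nonneg.2 one_sub_exp_neg_one_pos.le
  have hc : 0 ≤ β * exp (-x) := by positivity
  calc ‖PsiOne g β lam x‖
      ≤ (∫ t in Ioi 0, todaWeight g (β * exp (-x)) t) /
          ‖Complex.Gamma ((g : ℂ) - Complex.I * lam)‖ := norm_PsiOne_le g lam x hβ
    _ ≤ (exp (1 - g) / g + C * (s + 1)) / ‖Complex.Gamma ((g : ℂ) - Complex.I * lam)‖ *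
          exp (-(β * exp (-x))) := by
        rw [div_mul_eq_mul_div]
        gcongr
        exact integral_todaWeight_le hg (le_max_left _ _) hcs
    _ ≤ _ := by
        have hP : exp (1 - g) / g + C * (s + 1) ≤
            exp (1 - g) / g + C * (|log β| + 1) + C * |x| := by nlinarith
        have hθ : -(β * exp (-x)) ≤ -(β * exp (-x)) * theta (log β - x) := by
          rw [neg_mul]
          exact neg_le_neg (mul_le_of_le_one_right hc (theta_le_one _))
        simp only [Polynomial.eval_add, Polynomial.eval_C, Polynomial.eval_mul, Polynomial.eval_X]
        gcongr
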